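/- arXiv:2505.01007 — 2 statements merged into one kernel-verified Lean document; each statement's English description precedes it below -/
import Mathlib

section
/- Change of frequency component under one gradient step: with Y = W ⊛ X + b (circular convolution), H = DFT(Y), G = DFT(X), Q_{uv} the revised DFT of W, and a gradient descent step W' = W − η ∂L/∂W, the change ΔQ_{uv} = Q_{uv}(W') − Q_{uv}(W) equals −η ∑_{u'=0}^{M-1} ∑_{v'=0}^{N-1} A_{uvu'v'} · (∂L/∂H̄_{u'v'}) · Ḡ_{u'v'}, where A_{uvu'v'} = ∑_{t=0}^{K-1} ∑_{s=0}^{K-1} e^{i((u−u')t/M + (v−v')s/N)2π}. -/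
open Complex Finset

noncomputable def Ef (x : ℝ) : ℂ := Complex.exp (Complex.I * (x * (2 * Real.pi)))

lemma Ef_add (x y : ℝ) : Ef (x + y) = Ef x * Ef y := by
  unfold Ef; rw [← Complex.exp_add]; congr 1; push_cast; ring

lemma Ef_int (k : ℤ) : Ef (k : ℝ) = 1 := by
  unfold Ef
  have h := Complex.exp_int_mul_two_pi_mul_I k
  rw [← h]; congr 1; push_cast; ring

lemma Ef_pow (n : ℕ) (x : ℝ) : Ef ((n : ℝ) * x) = Ef x ^ n := by
  unfold Ef; rw [← Complex.exp_nat_mul]; congr 1; push_cast; ring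

lemma Ef_eq_one (x : ℝ) (h : Ef x = 1) : ∃ n : ℤ, x = n := by
  unfold Ef at h
  rw [Complex.exp_eq_one_iff] at h
  obtain ⟨n, hn⟩ := h
  refine ⟨n, ?_⟩
  have hπ : (Real.pi : ℂ) ≠ 0 := by exact_mod_cast Real.pi_ne_zero
  have h2 : (2 * (Real.pi:ℂ) * Complex.I) ≠ 0 := by
    simp [hπ, Complex.I_ne_zero]
  have hx : (x : ℂ) * (2 * (Real.pi:ℂ) * Complex.I) = (n:ℂ) * (2 * (Real.pi:ℂ) * Complex.I) := by
    linear_combination hn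
  have := mul_right_cancel₀ h2 hx
  exact_mod_cast this

lemma exp_I_eq {x : ℂ} (y : ℝ) (h : x = Complex.I * (↑y * (2 * (Real.pi:ℂ)))) :
    Complex.exp x = Ef y := by unfold Ef; rw [h]

lemma orth (M : ℕ) (hM : 0 < M) (j : ℤ) :
    ∑ u : Fin M, Ef ((u : ℝ) * (j : ℝ) / (M : ℝ)) = if (M : ℤ) ∣ j then (M : ℂ) else 0 := by
  have hMR : (M : ℝ) ≠ 0 := Nat.cast_ne_zero.mpr hM.ne'
  have hterm : ∀ u : Fin M, Ef ((u : ℝ) * (j:ℝ) / (M:ℝ)) = Ef ((j : ℝ) / M) ^ (u : ℕ) := by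
    intro u; rw [← Ef_pow]; congr 1; ring
  simp only [hterm]
  rw [Fin.sum_univ_eq_sum_range (fun i => Ef ((j : ℝ) / M) ^ i) M]
  by_cases hd : (M : ℤ) ∣ j
  · have h1 : Ef ((j : ℝ) / M) = 1 := by
      obtain ⟨k, hk⟩ := hd
      have : (j : ℝ) / M = (k : ℝ) := by rw [hk]; push_cast; field_simp
      rw [this]; exact Ef_int k
    simp only [h1, one_pow, Finset.sum_const, Finset.card_range, nsmul_eq_mul, mul_one]
    rw [if_pos hd]
  · have hζM : Ef ((j : ℝ) / M) ^ M = 1 := by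
      rw [← Ef_pow]
      have : (M : ℝ) * ((j : ℝ) / M) = (j : ℝ) := by field_simp
      rw [this]; exact Ef_int j
    have hζ1 : Ef ((j : ℝ) / M) ≠ 1 := by
      intro h
      obtain ⟨n, hn⟩ := Ef_eq_one _ h
      apply hd
      refine ⟨n, ?_⟩
      have : (j : ℝ) = (M : ℝ) * n := by
        field_simp at hn; linarith
      exact_mod_cast this
    rw [geom_sum_eq hζ1, hζM]
    simp [hd]

lemma collapse {M : ℕ} (hM : 0 < M) (m t : ℕ) (f : Fin M → ℂ) :
    ∑ p : Fin M, f p * (if (M : ℤ) ∣ ((p : ℤ) - m - t) then (M : ℂ) else 0)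
      = (M : ℂ) * f ⟨(m + t) % M, Nat.mod_lt _ hM⟩ := by
  rw [Finset.sum_eq_single (⟨(m + t) % M, Nat.mod_lt _ hM⟩ : Fin M)]
  · have hd : (M : ℤ) ∣ (((⟨(m + t) % M, Nat.mod_lt _ hM⟩ : Fin M) : ℤ) - m - t) := by
      have h1 : (((⟨(m + t) % M, Nat.mod_lt _ hM⟩ : Fin M) : ℤ) - m - t)
          = ((m + t : ℕ) : ℤ) % M - ((m + t : ℕ) : ℤ) := by
        push_cast; ring
      rw [h1, Int.emod_def]
      exact ⟨-(((m + t : ℕ) : ℤ) / M), by ring⟩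
    rw [if_pos hd]; ring
  · intro p _ hp
    have hnd : ¬ (M : ℤ) ∣ ((p : ℤ) - m - t) := by
      intro hdvd
      apply hp
      have h2 : (M : ℤ) ∣ ((m + t : ℕ) : ℤ) - ((m + t : ℕ) : ℤ) % M := by
        rw [Int.emod_def]; exact ⟨(((m + t : ℕ) : ℤ) / M), by ring⟩
      have h3 : (M : ℤ) ∣ ((p : ℤ) - ((m + t : ℕ) : ℤ) % M) := by
        have := dvd_add hdvd h2
        have heq : ((p : ℤ) - m - t) + (((m + t : ℕ) : ℤ) - ((m + t : ℕ) : ℤ) % M)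
            = (p : ℤ) - ((m + t : ℕ) : ℤ) % M := by push_cast; ring
        rwa [heq] at this
      have hp0 : (0 : ℤ) ≤ (p : ℤ) := Int.ofNat_nonneg _
      have hpM : ((p : ℕ) : ℤ) < M := by exact_mod_cast p.isLt
      have hm0 : (0 : ℤ) ≤ ((m + t : ℕ) : ℤ) % M := Int.emod_nonneg _ (by exact_mod_cast hM.ne')
      have hmM : ((m + t : ℕ) : ℤ) % M < M := Int.emod_lt_of_pos _ (by exact_mod_cast hM)
      have hz : (p : ℤ) - ((m + t : ℕ) : ℤ) % M = 0 := by
        refine Int.eq_zero_of_abs_lt_dvd h3 ?_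
        rw [abs_lt]; omega
      apply Fin.ext
      have : ((p : ℕ) : ℤ) = ((m + t : ℕ) : ℤ) % M := by omega
      have h4 : ((m + t : ℕ) : ℤ) % M = (((m + t) % M : ℕ) : ℤ) := by
        push_cast; ring
      simp only [Fin.val_mk]
      omega
    rw [if_neg hnd, mul_zero]
  · simp

lemma prod_helper {M N : ℕ} (c : ℂ) (f : Fin M → ℂ) (g : Fin N → ℂ) :
    ∑ a : Fin M, ∑ b : Fin N, c * (f a * g b) = c * ((∑ a, f a) * (∑ b, g b)) := by
  rw [Finset.sum_mul_sum, Finset.mul_sum]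
  refine Finset.sum_congr rfl fun a _ => ?_
  rw [Finset.mul_sum]

lemma key (M N : ℕ) (hM : 0 < M) (hN : 0 < N) (dY X : Fin M → Fin N → ℝ)
    (u : Fin M) (v : Fin N) (t s : ℕ) :
    ∑ w : Fin M × Fin N,
      Ef (((u:ℝ) - ((w.1 : Fin M) :ℝ)) * t / M + ((v:ℝ) - ((w.2 : Fin N):ℝ)) * s / N)
        * ((1 / ((M:ℂ)*N) * ∑ m : Fin M, ∑ n : Fin N,
              (dY m n : ℂ) * Ef (-(((w.1 : Fin M):ℝ) * m / M + ((w.2 : Fin N):ℝ) * n / N)))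
        * (∑ p : Fin M, ∑ q : Fin N,
              (X p q : ℂ) * Ef (((w.1 : Fin M):ℝ) * p / M + ((w.2 : Fin N):ℝ) * q / N)))
    = Ef ((u:ℝ)*t/M + (v:ℝ)*s/N) *
        ∑ m : Fin M, ∑ n : Fin N, (dY m n : ℂ) *
          (X ⟨((m:ℕ) + t) % M, Nat.mod_lt _ hM⟩ ⟨((n:ℕ) + s) % N, Nat.mod_lt _ hN⟩ : ℂ) := by
  have hMC : (M : ℂ) ≠ 0 := Nat.cast_ne_zero.mpr hM.ne'
  have hNC : (N : ℂ) ≠ 0 := Nat.cast_ne_zero.mpr hN.ne'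
  have step1 : ∀ w : Fin M × Fin N,
      Ef (((u:ℝ) - (w.1:ℝ)) * t / M + ((v:ℝ) - (w.2:ℝ)) * s / N)
        * ((1 / ((M:ℂ)*N) * ∑ m : Fin M, ∑ n : Fin N,
              (dY m n : ℂ) * Ef (-((w.1:ℝ) * m / M + (w.2:ℝ) * n / N)))
        * (∑ p : Fin M, ∑ q : Fin N,
              (X p q : ℂ) * Ef ((w.1:ℝ) * p / M + (w.2:ℝ) * q / N)))
      = ∑ y : Fin M × Fin N, ∑ z : Fin M × Fin N,
          (1 / ((M:ℂ)*N)) * (dY z.1 z.2 : ℂ) * (X y.1 y.2 : ℂ) *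
            (Ef (((u:ℝ) - (w.1:ℝ)) * t / M + ((v:ℝ) - (w.2:ℝ)) * s / N)
              * Ef (-((w.1:ℝ) * z.1 / M + (w.2:ℝ) * z.2 / N))
              * Ef ((w.1:ℝ) * y.1 / M + (w.2:ℝ) * y.2 / N)) := by
    intro w
    rw [(Fintype.sum_prod_type (f := fun z : Fin M × Fin N =>
          (dY z.1 z.2 : ℂ) * Ef (-((w.1:ℝ) * z.1 / M + (w.2:ℝ) * z.2 / N)))).symm,
        (Fintype.sum_prod_type (f := fun y : Fin M × Fin N =>
          (X y.1 y.2 : ℂ) * Ef ((w.1:ℝ) * y.1 / M + (w.2:ℝ) * y.2 / N))).symm,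
        Finset.mul_sum, Finset.mul_sum]
    refine Finset.sum_congr rfl fun y _ => ?_
    rw [Finset.mul_sum, Finset.sum_mul, Finset.mul_sum]
    refine Finset.sum_congr rfl fun z _ => ?_
    ring
  simp only [step1]
  rw [Finset.sum_comm]
  conv_lhs => enter [2, y]; rw [Finset.sum_comm]
  rw [Finset.sum_comm]
  calc ∑ z : Fin M × Fin N, ∑ y : Fin M × Fin N, ∑ w : Fin M × Fin N,
        (1 / ((M:ℂ)*N)) * (dY z.1 z.2 : ℂ) * (X y.1 y.2 : ℂ) *
          (Ef (((u:ℝ) - (w.1:ℝ)) * t / M + ((v:ℝ) - (w.2:ℝ)) * s / N)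
            * Ef (-((w.1:ℝ) * z.1 / M + (w.2:ℝ) * z.2 / N))
            * Ef ((w.1:ℝ) * y.1 / M + (w.2:ℝ) * y.2 / N))
      = ∑ z : Fin M × Fin N, ∑ y : Fin M × Fin N,
        (1 / ((M:ℂ)*N)) * (dY z.1 z.2 : ℂ) * (X y.1 y.2 : ℂ) *
          (Ef ((u:ℝ)*t/M + (v:ℝ)*s/N) *
            ((if (M:ℤ) ∣ ((y.1:ℤ) - z.1 - t) then (M:ℂ) else 0) *
             (if (N:ℤ) ∣ ((y.2:ℤ) - z.2 - s) then (N:ℂ) else 0))) := by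
        refine Finset.sum_congr rfl fun z _ => ?_
        refine Finset.sum_congr rfl fun y _ => ?_
        rw [← Finset.mul_sum]
        congr 1
        calc ∑ w : Fin M × Fin N,
              (Ef (((u:ℝ) - (w.1:ℝ)) * t / M + ((v:ℝ) - (w.2:ℝ)) * s / N)
                * Ef (-((w.1:ℝ) * z.1 / M + (w.2:ℝ) * z.2 / N))
                * Ef ((w.1:ℝ) * y.1 / M + (w.2:ℝ) * y.2 / N))
            = ∑ a : Fin M, ∑ b : Fin N,
                Ef ((u:ℝ)*t/M + (v:ℝ)*s/N) *
                  (Ef ((a:ℝ) * ((((y.1:ℤ) - z.1 - t) : ℤ) : ℝ) / M)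
                    * Ef ((b:ℝ) * ((((y.2:ℤ) - z.2 - s) : ℤ) : ℝ) / N)) := by
              rw [Fintype.sum_prod_type]
              refine Finset.sum_congr rfl fun a _ => ?_
              refine Finset.sum_congr rfl fun b _ => ?_
              rw [← Ef_add, ← Ef_add, ← Ef_add, ← Ef_add]
              congr 1
              push_cast
              ring
          _ = Ef ((u:ℝ)*t/M + (v:ℝ)*s/N) *
                ((∑ a : Fin M, Ef ((a:ℝ) * ((((y.1:ℤ) - z.1 - t) : ℤ) : ℝ) / M))
                  * (∑ b : Fin N, Ef ((b:ℝ) * ((((y.2:ℤ) - z.2 - s) : ℤ) : ℝ) / N))) :=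
              prod_helper _ _ _
          _ = Ef ((u:ℝ)*t/M + (v:ℝ)*s/N) *
                ((if (M:ℤ) ∣ ((y.1:ℤ) - z.1 - t) then (M:ℂ) else 0) *
                 (if (N:ℤ) ∣ ((y.2:ℤ) - z.2 - s) then (N:ℂ) else 0)) := by
              rw [orth M hM, orth N hN]
      _ = ∑ z : Fin M × Fin N,
        (1 / ((M:ℂ)*N)) * (dY z.1 z.2 : ℂ) *
          (Ef ((u:ℝ)*t/M + (v:ℝ)*s/N) * ((M:ℂ) * (N:ℂ) *
            (X ⟨((z.1:ℕ) + t) % M, Nat.mod_lt _ hM⟩ ⟨((z.2:ℕ) + s) % N, Nat.mod_lt _ hN⟩ : ℂ))) := by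
        refine Finset.sum_congr rfl fun z _ => ?_
        rw [Fintype.sum_prod_type]
        have reshape : ∀ p : Fin M,
            ∑ q : Fin N, (1 / ((M:ℂ)*N)) * (dY z.1 z.2 : ℂ) * (X p q : ℂ) *
              (Ef ((u:ℝ)*t/M + (v:ℝ)*s/N) *
                ((if (M:ℤ) ∣ ((p:ℤ) - z.1 - t) then (M:ℂ) else 0) *
                 (if (N:ℤ) ∣ ((q:ℤ) - z.2 - s) then (N:ℂ) else 0)))
            = ((∑ q : Fin N, ((1 / ((M:ℂ)*N)) * (dY z.1 z.2 : ℂ) * (X p q : ℂ) *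
                  Ef ((u:ℝ)*t/M + (v:ℝ)*s/N)) *
                 (if (N:ℤ) ∣ ((q:ℤ) - z.2 - s) then (N:ℂ) else 0))) *
              (if (M:ℤ) ∣ ((p:ℤ) - z.1 - t) then (M:ℂ) else 0) := by
          intro p
          rw [Finset.sum_mul]
          refine Finset.sum_congr rfl fun q _ => by ring
        simp only [reshape]
        rw [collapse hM (z.1 : ℕ) t]
        rw [collapse hN (z.2 : ℕ) s]
        ring
      _ = Ef ((u:ℝ)*t/M + (v:ℝ)*s/N) *
            ∑ m : Fin M, ∑ n : Fin N, (dY m n : ℂ) *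
              (X ⟨((m:ℕ) + t) % M, Nat.mod_lt _ hM⟩ ⟨((n:ℕ) + s) % N, Nat.mod_lt _ hN⟩ : ℂ) := by
        simp only [Finset.mul_sum]
        rw [Fintype.sum_prod_type]
        refine Finset.sum_congr rfl fun m _ => ?_
        refine Finset.sum_congr rfl fun n _ => ?_
        field_simp

/-- Change of a filter's frequency component under one gradient-descent step:
`ΔQ_{uv} = -η ∑_{u',v'} A_{uvu'v'} (∂L/∂H̄_{u'v'}) Ḡ_{u'v'}`. Here `dY = ∂L/∂Y`,
the weight gradient is obtained by the chain rule through the circular convolution,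
and `∂L/∂H̄` is the Wirtinger derivative w.r.t. the conjugate DFT coefficient of `Y`. -/
theorem gradient_step_freq_change (M N K : ℕ) (hM : 0 < M) (hN : 0 < N) (hK : 0 < K)
    (hKM : K ≤ M) (hKN : K ≤ N) (η b : ℝ) (hη : 0 < η)
    (W W' : Fin K → Fin K → ℝ) (X : Fin M → Fin N → ℝ)
    (Y : Fin M → Fin N → ℝ)
    (hY : ∀ m n, Y m n = b + ∑ t : Fin K, ∑ s : Fin K,
      W t s * X ⟨((m : ℕ) + t) % M, Nat.mod_lt _ hM⟩ ⟨((n : ℕ) + s) % N, Nat.mod_lt _ hN⟩)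
    (dY : Fin M → Fin N → ℝ) (dW : Fin K → Fin K → ℝ)
    (hdW : ∀ t s, dW t s = ∑ m : Fin M, ∑ n : Fin N,
      dY m n * X ⟨((m : ℕ) + t) % M, Nat.mod_lt _ hM⟩ ⟨((n : ℕ) + s) % N, Nat.mod_lt _ hN⟩)
    (hW' : ∀ t s, W' t s = W t s - η * dW t s)
    (G : Fin M → Fin N → ℂ)
    (hG : ∀ u v, G u v = ∑ m : Fin M, ∑ n : Fin N, (X m n : ℂ) *
      Complex.exp (-(Complex.I * (((u : ℝ) * m / M + (v : ℝ) * n / N) * (2 * Real.pi)))))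
    (dHbar : Fin M → Fin N → ℂ)
    (hdHbar : ∀ u v, dHbar u v = (1 / ((M : ℂ) * N)) * ∑ m : Fin M, ∑ n : Fin N,
      (dY m n : ℂ) *
        Complex.exp (-(Complex.I * (((u : ℝ) * m / M + (v : ℝ) * n / N) * (2 * Real.pi)))))
    (A : Fin M → Fin N → Fin M → Fin N → ℂ)
    (hA : ∀ u v u' v', A u v u' v' = ∑ t ∈ Finset.range K, ∑ s ∈ Finset.range K,
      Complex.exp (Complex.I *
        ((((u : ℝ) - (u' : ℝ)) * t / M + ((v : ℝ) - (v' : ℝ)) * s / N) * (2 * Real.pi))))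
    (Q : (Fin K → Fin K → ℝ) → Fin M → Fin N → ℂ)
    (hQ : ∀ V u v, Q V u v = ∑ t : Fin K, ∑ s : Fin K, (V t s : ℂ) *
      Complex.exp (Complex.I * (((u : ℝ) * t / M + (v : ℝ) * s / N) * (2 * Real.pi)))) :
    ∀ u v, Q W' u v - Q W u v =
      -(η : ℂ) * ∑ u' : Fin M, ∑ v' : Fin N,
        A u v u' v' * dHbar u' v' * (starRingEnd ℂ) (G u' v') := by
  intro u v
  -- Ef-normalized forms of the hypotheses
  have hGc : ∀ (u' : Fin M) (v' : Fin N), (starRingEnd ℂ) (G u' v')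
      = ∑ m : Fin M, ∑ n : Fin N, (X m n : ℂ) * Ef ((u' : ℝ) * m / M + (v' : ℝ) * n / N) := by
    intro u' v'
    rw [hG, map_sum]
    refine Finset.sum_congr rfl fun m _ => ?_
    rw [map_sum]
    refine Finset.sum_congr rfl fun n _ => ?_
    rw [map_mul, Complex.conj_ofReal, ← Complex.exp_conj]
    congr 1
    rw [exp_I_eq ((u' : ℝ) * m / M + (v' : ℝ) * n / N)]
    simp only [map_neg, map_mul, map_add, map_div₀, map_ofNat, Complex.conj_I,
      Complex.conj_natCast, Complex.conj_ofReal]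
    push_cast
    ring
  have hdH : ∀ (u' : Fin M) (v' : Fin N), dHbar u' v'
      = 1 / ((M:ℂ)*N) * ∑ m : Fin M, ∑ n : Fin N,
          (dY m n : ℂ) * Ef (-((u' : ℝ) * m / M + (v' : ℝ) * n / N)) := by
    intro u' v'
    rw [hdHbar]
    congr 1
    refine Finset.sum_congr rfl fun m _ => ?_
    refine Finset.sum_congr rfl fun n _ => ?_
    congr 1
    rw [exp_I_eq (-((u' : ℝ) * m / M + (v' : ℝ) * n / N))]
    push_cast
    ring
  have hA' : ∀ (u' : Fin M) (v' : Fin N), A u v u' v'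
      = ∑ t ∈ Finset.range K, ∑ s ∈ Finset.range K,
          Ef (((u:ℝ) - (u':ℝ)) * t / M + ((v:ℝ) - (v':ℝ)) * s / N) := by
    intro u' v'
    rw [hA]
    refine Finset.sum_congr rfl fun t _ => ?_
    refine Finset.sum_congr rfl fun s _ => ?_
    rw [exp_I_eq (((u:ℝ) - (u':ℝ)) * t / M + ((v:ℝ) - (v':ℝ)) * s / N)]
    push_cast
    ring
  have hQ' : ∀ V : Fin K → Fin K → ℝ, Q V u v
      = ∑ t : Fin K, ∑ s : Fin K, (V t s : ℂ) * Ef ((u:ℝ) * t / M + (v:ℝ) * s / N) := by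
    intro V
    rw [hQ]
    refine Finset.sum_congr rfl fun t _ => ?_
    refine Finset.sum_congr rfl fun s _ => ?_
    congr 1
    rw [exp_I_eq ((u:ℝ) * t / M + (v:ℝ) * s / N)]
    push_cast
    ring
  -- the main computation on the right-hand side
  have main : ∑ u' : Fin M, ∑ v' : Fin N, A u v u' v' * dHbar u' v' * (starRingEnd ℂ) (G u' v')
      = ∑ t ∈ Finset.range K, ∑ s ∈ Finset.range K,
          Ef ((u:ℝ)*t/M + (v:ℝ)*s/N) *
            ∑ m : Fin M, ∑ n : Fin N, (dY m n : ℂ) *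
              (X ⟨((m:ℕ) + t) % M, Nat.mod_lt _ hM⟩ ⟨((n:ℕ) + s) % N, Nat.mod_lt _ hN⟩ : ℂ) := by
    calc ∑ u' : Fin M, ∑ v' : Fin N, A u v u' v' * dHbar u' v' * (starRingEnd ℂ) (G u' v')
        = ∑ w : Fin M × Fin N, A u v w.1 w.2 * dHbar w.1 w.2 * (starRingEnd ℂ) (G w.1 w.2) :=
          (Fintype.sum_prod_type (f := fun w : Fin M × Fin N =>
            A u v w.1 w.2 * dHbar w.1 w.2 * (starRingEnd ℂ) (G w.1 w.2))).symm
      _ = ∑ w : Fin M × Fin N, ∑ t ∈ Finset.range K, ∑ s ∈ Finset.range K,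
            Ef (((u:ℝ) - ((w.1 : Fin M):ℝ)) * t / M + ((v:ℝ) - ((w.2 : Fin N):ℝ)) * s / N)
              * (dHbar w.1 w.2 * (starRingEnd ℂ) (G w.1 w.2)) := by
          refine Finset.sum_congr rfl fun w _ => ?_
          rw [mul_assoc, hA', Finset.sum_mul]
          refine Finset.sum_congr rfl fun t _ => ?_
          rw [Finset.sum_mul]
      _ = ∑ t ∈ Finset.range K, ∑ s ∈ Finset.range K, ∑ w : Fin M × Fin N,
            Ef (((u:ℝ) - ((w.1 : Fin M):ℝ)) * t / M + ((v:ℝ) - ((w.2 : Fin N):ℝ)) * s / N)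
              * (dHbar w.1 w.2 * (starRingEnd ℂ) (G w.1 w.2)) := by
          rw [Finset.sum_comm]
          exact Finset.sum_congr rfl fun t _ => Finset.sum_comm
      _ = ∑ t ∈ Finset.range K, ∑ s ∈ Finset.range K,
            Ef ((u:ℝ)*t/M + (v:ℝ)*s/N) *
              ∑ m : Fin M, ∑ n : Fin N, (dY m n : ℂ) *
                (X ⟨((m:ℕ) + t) % M, Nat.mod_lt _ hM⟩
                   ⟨((n:ℕ) + s) % N, Nat.mod_lt _ hN⟩ : ℂ) := by
          refine Finset.sum_congr rfl fun t _ => ?_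
          refine Finset.sum_congr rfl fun s _ => ?_
          rw [← key M N hM hN dY X u v t s]
          refine Finset.sum_congr rfl fun w _ => ?_
          rw [hdH, hGc]
  rw [main, hQ' W', hQ' W, ← Finset.sum_sub_distrib, Finset.mul_sum,
      ← Fin.sum_univ_eq_sum_range (fun tn => -(η:ℂ) * ∑ s ∈ Finset.range K,
        (Ef ((u:ℝ) * tn / M + (v:ℝ) * s / N) *
          ∑ m : Fin M, ∑ n : Fin N, (dY m n : ℂ) *
            (X ⟨((m:ℕ) + tn) % M, Nat.mod_lt _ hM⟩
               ⟨((n:ℕ) + s) % N, Nat.mod_lt _ hN⟩ : ℂ))) K]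
  refine Finset.sum_congr rfl fun t _ => ?_
  rw [Finset.mul_sum, ← Finset.sum_sub_distrib,
      ← Fin.sum_univ_eq_sum_range (fun sn => -(η:ℂ) *
        (Ef ((u:ℝ) * (t:ℕ) / M + (v:ℝ) * sn / N) *
          ∑ m : Fin M, ∑ n : Fin N, (dY m n : ℂ) *
            (X ⟨((m:ℕ) + (t:ℕ)) % M, Nat.mod_lt _ hM⟩
               ⟨((n:ℕ) + sn) % N, Nat.mod_lt _ hN⟩ : ℂ))) K]
  refine Finset.sum_congr rfl fun s _ => ?_
  rw [hW', hdW]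
  push_cast
  ring
end

section
/- Invariance of special frequency components: assume the input X only contains the fundamental frequency, i.e., G_{u'v'} = 0 for all (u',v') ≠ (0,0), and K divides M and N. Then for any frequency (u,v) with u = iM/K or v = jN/K for some i,j ∈ {1,...,K−1}, the change of the filter's frequency component under one gradient descent step is zero: ΔQ_{uv} = −η ∑_{u',v'} A_{uvu'v'}(∂L/∂H̄_{u'v'})Ḡ_{u'v'} = 0. -/
open Complex Finset

lemma sum_exp_zero (K : ℕ) (hK : 0 < K) (i : ℕ) (h1 : 1 ≤ i) (h2 : i ≤ K - 1) :
    ∑ t ∈ Finset.range K, Complex.exp (Complex.I * (((i : ℝ) * t / K) * (2 * Real.pi))) = 0 := by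
  have hKne : (K : ℂ) ≠ 0 := Nat.cast_ne_zero.mpr hK.ne'
  set ω : ℂ := Complex.exp (Complex.I * ((i : ℝ) / K * (2 * Real.pi))) with hω
  have hpow : ∀ t : ℕ, Complex.exp (Complex.I * (((i : ℝ) * t / K) * (2 * Real.pi))) = ω ^ t := by
    intro t
    rw [hω, ← Complex.exp_nat_mul]
    ring_nf
  have hωK : ω ^ K = 1 := by
    rw [hω, ← Complex.exp_nat_mul]
    have : (K : ℂ) * (Complex.I * ((i : ℝ) / K * (2 * Real.pi))) = (i : ℤ) * (2 * Real.pi * Complex.I) := by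
      push_cast
      field_simp
    rw [this, Complex.exp_int_mul_two_pi_mul_I]
  have hω1 : ω ≠ 1 := by
    rw [hω, Ne, Complex.exp_eq_one_iff]
    rintro ⟨n, hn⟩
    have hn' : ((i : ℝ) / K : ℂ) = (n : ℂ) := by
      have h2pi : (2 * (Real.pi : ℂ) * Complex.I) ≠ 0 := by
        simp [Real.pi_ne_zero, Complex.I_ne_zero, Complex.ofReal_ne_zero]
      have heq : ((i : ℝ) / K : ℂ) * (2 * Real.pi * Complex.I) = (n : ℂ) * (2 * Real.pi * Complex.I) := by
        rw [← hn]; push_cast; ring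
      exact mul_right_cancel₀ h2pi heq
    have : (i : ℝ) / K = (n : ℝ) := by exact_mod_cast hn'
    have hlt : (i : ℝ) / K < 1 := by
      rw [div_lt_one (by positivity)]
      exact_mod_cast Nat.lt_of_le_of_lt h2 (Nat.sub_lt hK one_pos)
    have hpos : 0 < (i : ℝ) / K := by positivity
    rw [this] at hlt hpos
    have : (0 : ℤ) < n := by exact_mod_cast hpos
    have : (n : ℝ) ≥ 1 := by exact_mod_cast this
    linarith
  calc ∑ t ∈ Finset.range K, Complex.exp (Complex.I * (((i : ℝ) * t / K) * (2 * Real.pi)))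
      = ∑ t ∈ Finset.range K, ω ^ t := by simp_rw [hpow]
    _ = (ω ^ K - 1) / (ω - 1) := geom_sum_eq hω1 K
    _ = 0 := by rw [hωK]; simp

/-- Invariance of special frequency components: if the input `X` only contains the
fundamental frequency (`G u' v' = 0` for `(u',v') ≠ (0,0)`), `K ∣ M`, `K ∣ N`, and
`u = i·M/K` or `v = j·N/K` with `i,j ∈ {1,…,K-1}`, then the change of the filter's
frequency component under one gradient step,
`ΔQ_{uv} = -η ∑_{u',v'} A_{uvu'v'} (∂L/∂H̄_{u'v'}) Ḡ_{u'v'}`, vanishes. -/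
theorem invariant_freq_components (M N K : ℕ) (hM : 0 < M) (hN : 0 < N) (hK : 0 < K)
    (hKM : K ∣ M) (hKN : K ∣ N) (η : ℝ) (hη : 0 < η)
    (X : Fin M → Fin N → ℝ)
    (G : Fin M → Fin N → ℂ)
    (hG : ∀ u v, G u v = ∑ m : Fin M, ∑ n : Fin N, (X m n : ℂ) *
      Complex.exp (-(Complex.I * (((u : ℝ) * m / M + (v : ℝ) * n / N) * (2 * Real.pi)))))
    (hG0 : ∀ (u' : Fin M) (v' : Fin N), ¬((u' : ℕ) = 0 ∧ (v' : ℕ) = 0) → G u' v' = 0)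
    (dHbar : Fin M → Fin N → ℂ)
    (A : Fin M → Fin N → Fin M → Fin N → ℂ)
    (hA : ∀ u v u' v', A u v u' v' = ∑ t ∈ Finset.range K, ∑ s ∈ Finset.range K,
      Complex.exp (Complex.I *
        ((((u : ℝ) - (u' : ℝ)) * t / M + ((v : ℝ) - (v' : ℝ)) * s / N) * (2 * Real.pi))))
    (u : Fin M) (v : Fin N)
    (huv : (∃ i : ℕ, 1 ≤ i ∧ i ≤ K - 1 ∧ (u : ℕ) = i * (M / K)) ∨
           (∃ j : ℕ, 1 ≤ j ∧ j ≤ K - 1 ∧ (v : ℕ) = j * (N / K))) :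
    -(η : ℂ) * ∑ u' : Fin M, ∑ v' : Fin N,
        A u v u' v' * dHbar u' v' * (starRingEnd ℂ) (G u' v') = 0 := by
  have hzero : ∀ (u' : Fin M) (v' : Fin N),
      A u v u' v' * dHbar u' v' * (starRingEnd ℂ) (G u' v') = 0 := by
    intro u' v'
    by_cases h : (u' : ℕ) = 0 ∧ (v' : ℕ) = 0
    · -- show A u v u' v' = 0
      have hu'0 : ((u' : ℕ) : ℝ) = 0 := by exact_mod_cast h.1
      have hv'0 : ((v' : ℕ) : ℝ) = 0 := by exact_mod_cast h.2
      have hA0 : A u v u' v' =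
          (∑ t ∈ Finset.range K, Complex.exp (Complex.I * (((u : ℝ) * t / M) * (2 * Real.pi)))) *
          (∑ s ∈ Finset.range K, Complex.exp (Complex.I * (((v : ℝ) * s / N) * (2 * Real.pi)))) := by
        rw [hA, Finset.sum_mul_sum]
        refine Finset.sum_congr rfl fun t _ => Finset.sum_congr rfl fun s _ => ?_
        rw [← Complex.exp_add]
        congr 1
        rw [hu'0, hv'0]
        push_cast
        ring
      have hAz : A u v u' v' = 0 := by
        rcases huv with ⟨i, hi1, hi2, hui⟩ | ⟨j, hj1, hj2, hvj⟩
        · have hMK : (M : ℝ) = (K : ℝ) * ((M / K : ℕ) : ℝ) := by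
            exact_mod_cast (Nat.mul_div_cancel' hKM).symm
          have hMKpos : 0 < ((M / K : ℕ) : ℝ) := by
            exact_mod_cast Nat.div_pos (Nat.le_of_dvd hM hKM) hK
          have hfac : (∑ t ∈ Finset.range K,
              Complex.exp (Complex.I * (((u : ℝ) * t / M) * (2 * Real.pi)))) =
              ∑ t ∈ Finset.range K,
              Complex.exp (Complex.I * (((i : ℝ) * t / K) * (2 * Real.pi))) := by
            refine Finset.sum_congr rfl fun t _ => ?_
            congr 3
            have hMKc : (M : ℂ) = (K : ℂ) * ((M / K : ℕ) : ℂ) := by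
              exact_mod_cast (Nat.mul_div_cancel' hKM).symm
            have hKne : (K : ℂ) ≠ 0 := Nat.cast_ne_zero.mpr hK.ne'
            have hMKne : ((M / K : ℕ) : ℂ) ≠ 0 := by
              exact_mod_cast (Nat.div_pos (Nat.le_of_dvd hM hKM) hK).ne'
            have hMne : (M : ℂ) ≠ 0 := Nat.cast_ne_zero.mpr hM.ne'
            rw [hui]
            push_cast
            rw [hMKc]
            field_simp
          rw [hA0, hfac, sum_exp_zero K hK i hi1 hi2, zero_mul]
        · have hNK : (N : ℝ) = (K : ℝ) * ((N / K : ℕ) : ℝ) := by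
            exact_mod_cast (Nat.mul_div_cancel' hKN).symm
          have hNKpos : 0 < ((N / K : ℕ) : ℝ) := by
            exact_mod_cast Nat.div_pos (Nat.le_of_dvd hN hKN) hK
          have hfac : (∑ s ∈ Finset.range K,
              Complex.exp (Complex.I * (((v : ℝ) * s / N) * (2 * Real.pi)))) =
              ∑ s ∈ Finset.range K,
              Complex.exp (Complex.I * (((j : ℝ) * s / K) * (2 * Real.pi))) := by
            refine Finset.sum_congr rfl fun s _ => ?_
            congr 3
            have hNKc : (N : ℂ) = (K : ℂ) * ((N / K : ℕ) : ℂ) := by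
              exact_mod_cast (Nat.mul_div_cancel' hKN).symm
            have hKne : (K : ℂ) ≠ 0 := Nat.cast_ne_zero.mpr hK.ne'
            have hNKne : ((N / K : ℕ) : ℂ) ≠ 0 := by
              exact_mod_cast (Nat.div_pos (Nat.le_of_dvd hN hKN) hK).ne'
            have hNne : (N : ℂ) ≠ 0 := Nat.cast_ne_zero.mpr hN.ne'
            rw [hvj]
            push_cast
            rw [hNKc]
            field_simp
          rw [hA0, hfac, sum_exp_zero K hK j hj1 hj2, mul_zero]
      rw [hAz, zero_mul, zero_mul]
    · rw [hG0 u' v' h, map_zero, mul_zero]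
  rw [Finset.sum_eq_zero fun u' _ => Finset.sum_eq_zero fun v' _ => hzero u' v', mul_zero]
end
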